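/- Let ρ be a quantum state on a finite-dimensional Hilbert space, let P_m^ρ be the spectral projector of ρ corresponding to its m largest eigenvalues (counted with multiplicity), and suppose λ_{m+1}^ρ < λ_m^ρ (a spectral gap at level m). Then for any sequence of states ρ_n converging in trace norm to ρ, the truncated operators P_m^{ρ_n} ρ_n converge in trace norm to P_m^ρ ρ. -/

import Mathlib

open scoped ComplexOrder
open Filter Topology

/-- The trace norm `‖A‖₁ = Tr √(Aᴴ A)` of a complex matrix. -/
noncomputable def traceNorm {n : Type*} [Fintype n] [DecidableEq n] (A : Matrix n n ℂ) : ℝ :=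
  ((Matrix.posSemidef_conjTranspose_mul_self A).1.eigenvectorUnitary.1 *
    Matrix.diagonal (((↑) : ℝ → ℂ) ∘ (Real.sqrt ∘ (Matrix.posSemidef_conjTranspose_mul_self A).1.eigenvalues)) *
    (star (Matrix.posSemidef_conjTranspose_mul_self A).1.eigenvectorUnitary : Matrix n n ℂ)).trace.re

/-- The spectral projector of a Hermitian matrix onto the eigenvalues exceeding `a`. -/
noncomputable def specProjAbove {n : Type*} [Fintype n] [DecidableEq n]
    {A : Matrix n n ℂ} (hA : A.IsHermitian) (a : ℝ) : Matrix n n ℂ :=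
  (hA.eigenvectorUnitary : Matrix n n ℂ) *
    Matrix.diagonal (fun i => if a < hA.eigenvalues i then (1 : ℂ) else 0) *
    star (hA.eigenvectorUnitary : Matrix n n ℂ)

/-- `Q` is the spectral projector of the Hermitian matrix `A` corresponding to its `m` largest
eigenvalues (counted with multiplicity), well defined when there is a spectral gap at level `m`:
there is a threshold `a`, not an eigenvalue, with exactly `m` eigenvalues above it. -/
def IsTopSpectralProj {n : Type*} [Fintype n] [DecidableEq n]
    {A : Matrix n n ℂ} (hA : A.IsHermitian) (m : ℕ) (Q : Matrix n n ℂ) : Prop :=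
  ∃ a : ℝ, (∀ i, hA.eigenvalues i ≠ a) ∧
    (Finset.univ.filter fun i => a < hA.eigenvalues i).card = m ∧
    Q = specProjAbove hA a

/-!
Choose a threshold `a` in the spectral gap of `ρ₀`, so that `P = 1_{(a,∞)}(ρ₀)`, and a continuous
ramp `f` equal to `1_{(a,∞)}` away from a `δ`-neighbourhood of `a`. Continuity of the continuous
functional calculus gives `f(ρₖ) → f(ρ₀) = P`. Applied to a bump function around `a`, it also shows
that eventually no eigenvalue of `ρₖ` is `δ`-close to `a`, so that `f(ρₖ) = 1_{(a,∞)}(ρₖ)`. The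
trace of this projection counts the eigenvalues of `ρₖ` above `a`: an integer tending to `m`, hence
eventually equal to `m`, and then `Qₖ = 1_{(a,∞)}(ρₖ)`. Finally, in finite dimension trace-norm
convergence is ordinary convergence: `‖A‖ ≤ ‖A‖₁` for the operator norm, and `‖A‖₁ = Tr √(AᴴA)`
is continuous in `A`.
-/

open scoped Matrix

variable {n : Type*} [Fintype n] [DecidableEq n]

open scoped Matrix.Norms.L2Operator in
theorem Matrix.tendsto_cfc {f : ℝ → ℝ} (hf : Continuous f) {A : ℕ → Matrix n n ℂ}
    {A₀ : Matrix n n ℂ} (hA : ∀ k, (A k).IsHermitian) (hA₀ : A₀.IsHermitian)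
    (hlim : Tendsto A atTop (𝓝 A₀)) :
    Tendsto (fun k => cfc f (A k)) atTop (𝓝 (cfc f A₀)) := by
  have hcont : ContinuousOn (cfc f) {B : Matrix n n ℂ | IsSelfAdjoint B} :=
    ContinuousOn.cfc_of_mem_nhdsSet (s := Set.univ) f Filter.univ_mem continuousOn_id
      (fun B hB => hB) hf.continuousOn
  exact (hcont A₀ hA₀).tendsto.comp (tendsto_nhdsWithin_iff.2 ⟨hlim, .of_forall hA⟩)

theorem Matrix.IsHermitian.trace_cfc {A : Matrix n n ℂ} (hA : A.IsHermitian) (f : ℝ → ℝ) :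
    (cfc f A).trace = ∑ i, (f (hA.eigenvalues i) : ℂ) := by
  rw [hA.cfc_eq, Matrix.IsHermitian.cfc, Unitary.conjStarAlgAut_apply, Matrix.trace_mul_cycle,
    Unitary.coe_star_mul_self, one_mul, Matrix.trace_diagonal]
  rfl

theorem traceNorm_eq_re_trace_cfc_sqrt (A : Matrix n n ℂ) :
    traceNorm A = (cfc Real.sqrt (Aᴴ * A)).trace.re := by
  rw [(Matrix.posSemidef_conjTranspose_mul_self A).1.cfc_eq]
  rfl

open scoped Matrix.Norms.L2Operator in
theorem norm_le_traceNorm (A : Matrix n n ℂ) : ‖A‖ ≤ traceNorm A := by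
  have hB := Matrix.posSemidef_conjTranspose_mul_self A
  set μ := hB.1.eigenvalues
  have hμ : ∀ i, 0 ≤ μ i := hB.eigenvalues_nonneg
  have htn : traceNorm A = ∑ i, Real.sqrt (μ i) := by
    rw [traceNorm_eq_re_trace_cfc_sqrt, hB.1.trace_cfc, Complex.re_sum]
    simp only [Complex.ofReal_re, μ]
  have hnonneg : 0 ≤ traceNorm A := htn ▸ Finset.sum_nonneg fun i _ => Real.sqrt_nonneg _
  have hsq : ‖Aᴴ * A‖ ≤ traceNorm A ^ 2 := by
    rw [← cfc_id' ℝ (Aᴴ * A) hB.1]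
    refine norm_cfc_le (sq_nonneg _) ?_
    rw [hB.1.spectrum_real_eq_range_eigenvalues]
    rintro - ⟨i, rfl⟩
    calc ‖μ i‖ = Real.sqrt (μ i) ^ 2 := by rw [Real.sq_sqrt (hμ i), Real.norm_of_nonneg (hμ i)]
      _ ≤ traceNorm A ^ 2 := by
        rw [htn]
        gcongr
        exact Finset.single_le_sum (fun j _ => Real.sqrt_nonneg (μ j)) (Finset.mem_univ i)
  rw [← Matrix.star_eq_conjTranspose, CStarRing.norm_star_mul_self, ← sq] at hsq
  exact (pow_le_pow_iff_left₀ (norm_nonneg A) hnonneg two_ne_zero).1 hsq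

open scoped Matrix.Norms.L2Operator in
theorem tendsto_of_tendsto_traceNorm_sub {A : ℕ → Matrix n n ℂ} {A₀ : Matrix n n ℂ}
    (h : Tendsto (fun k => traceNorm (A k - A₀)) atTop (𝓝 0)) : Tendsto A atTop (𝓝 A₀) :=
  tendsto_iff_norm_sub_tendsto_zero.2 <|
    squeeze_zero (fun _ => norm_nonneg _) (fun _ => norm_le_traceNorm _) h

theorem tendsto_traceNorm_of_tendsto_zero {A : ℕ → Matrix n n ℂ} (h : Tendsto A atTop (𝓝 0)) :
    Tendsto (fun k => traceNorm (A k)) atTop (𝓝 0) := by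
  have hB : Tendsto (fun k => (A k)ᴴ * A k) atTop (𝓝 0) := by
    have := h.star.mul h
    rwa [star_zero, zero_mul] at this
  have := Matrix.tendsto_cfc Real.continuous_sqrt
    (fun k => Matrix.isHermitian_conjTranspose_mul_self (A k)) Matrix.isHermitian_zero hB
  rw [cfc_apply_zero, Real.sqrt_zero, map_zero] at this
  simp_rw [traceNorm_eq_re_trace_cfc_sqrt]
  have h2 : Tendsto (fun k => (cfc Real.sqrt ((A k)ᴴ * A k)).trace.re) atTop
      (𝓝 (Matrix.trace (0 : Matrix n n ℂ)).re) :=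
    ((Complex.continuous_re.comp continuous_id.matrix_trace).tendsto 0).comp this
  rwa [Matrix.trace_zero, Complex.zero_re] at h2

section SpectralProjector

open Finset

variable {A : Matrix n n ℂ} (hA : A.IsHermitian)

theorem specProjAbove_eq_cfc {a : ℝ} {f : ℝ → ℝ}
    (hf : ∀ i, f (hA.eigenvalues i) = if a < hA.eigenvalues i then 1 else 0) :
    specProjAbove hA a = cfc f A := by
  rw [hA.cfc_eq, Matrix.IsHermitian.cfc, Unitary.conjStarAlgAut_apply, specProjAbove]
  congr 3 with i
  simp [hf, apply_ite]

theorem trace_specProjAbove (a : ℝ) :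
    (specProjAbove hA a).trace = #{i | a < hA.eigenvalues i} := by
  rw [specProjAbove, Matrix.trace_mul_cycle, Unitary.coe_star_mul_self, one_mul,
    Matrix.trace_diagonal, sum_boole]

theorem specProjAbove_eq_of_card_eq {a b : ℝ}
    (h : #{i | a < hA.eigenvalues i} = #{i | b < hA.eigenvalues i}) :
    specProjAbove hA a = specProjAbove hA b := by
  wlog hab : a ≤ b generalizing a b
  · exact (this h.symm (le_of_not_ge hab)).symm
  have hsub : univ.filter (b < hA.eigenvalues ·) ⊆ univ.filter (a < hA.eigenvalues ·) :=
    monotone_filter_right _ fun _ _ => hab.trans_lt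
  have hiff : ∀ i, a < hA.eigenvalues i ↔ b < hA.eigenvalues i := by
    simpa [Finset.ext_iff] using eq_of_subset_of_card_le hsub h.le |>.symm
  simp only [specProjAbove, hiff]

end SpectralProjector

section Perturbation

open Finset

variable {A : ℕ → Matrix n n ℂ} {A₀ : Matrix n n ℂ} (hA : ∀ k, (A k).IsHermitian)
  (hA₀ : A₀.IsHermitian)

theorem tendsto_sum_eigenvalues {f : ℝ → ℝ} (hf : Continuous f) (hlim : Tendsto A atTop (𝓝 A₀)) :
    Tendsto (fun k => ∑ i, f ((hA k).eigenvalues i)) atTop (𝓝 (∑ i, f (hA₀.eigenvalues i))) := by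
  have key : ∀ (B : Matrix n n ℂ) (hB : B.IsHermitian),
      (cfc f B).trace.re = ∑ i, f (hB.eigenvalues i) := fun B hB => by
    rw [hB.trace_cfc, Complex.re_sum]
    simp only [Complex.ofReal_re]
  simp only [← key _ (hA _), ← key _ hA₀]
  exact ((Complex.continuous_re.comp continuous_id.matrix_trace).tendsto _).comp
    (Matrix.tendsto_cfc hf hA hA₀ hlim)

theorem eventually_forall_lt_abs_eigenvalues_sub (hlim : Tendsto A atTop (𝓝 A₀)) {a δ : ℝ}
    (hδ : 0 < δ) (hgap : ∀ i, 2 * δ ≤ |hA₀.eigenvalues i - a|) :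
    ∀ᶠ k in atTop, ∀ i, δ < |(hA k).eigenvalues i - a| := by
  -- `g = 1` on `[a - δ, a + δ]` and `g = 0` off `(a - 2δ, a + 2δ)`
  set g : ℝ → ℝ := fun x => max 0 (min 1 (2 - |x - a| / δ))
  have hg : Continuous g := by fun_prop
  have hg₀ : ∑ i, g (hA₀.eigenvalues i) = 0 := sum_eq_zero fun i _ => by
    have : 2 - |hA₀.eigenvalues i - a| / δ ≤ 0 := by
      rw [sub_nonpos, le_div_iff₀ hδ]
      linarith [hgap i]
    simp only [g, min_eq_right (this.trans zero_le_one), max_eq_left this]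
  have hsmall := (tendsto_sum_eigenvalues hA hA₀ hg hlim).eventually
    (gt_mem_nhds (hg₀ ▸ zero_lt_one))
  filter_upwards [hsmall] with k hk i
  by_contra! hi
  have hg₁ : g ((hA k).eigenvalues i) = 1 := by
    have : 1 ≤ 2 - |(hA k).eigenvalues i - a| / δ := by
      rw [le_sub_comm, div_le_iff₀ hδ]
      linarith
    simp only [g, min_eq_left this, max_eq_right zero_le_one]
  have := single_le_sum (fun j _ => le_max_left 0 _) (mem_univ i) |>.trans_lt hk
  linarith

theorem exists_eventually_specProjAbove_eq_cfc (hlim : Tendsto A atTop (𝓝 A₀)) {a : ℝ}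
    (ha : ∀ i, hA₀.eigenvalues i ≠ a) :
    ∃ f : ℝ → ℝ, Continuous f ∧ specProjAbove hA₀ a = cfc f A₀ ∧
      ∀ᶠ k in atTop, specProjAbove (hA k) a = cfc f (A k) := by
  obtain ⟨δ, hgap, hδ⟩ : ∃ δ, (∀ i, 2 * δ ≤ |hA₀.eigenvalues i - a|) ∧ 0 < δ := by
    have h2δ : Tendsto (fun δ : ℝ => 2 * δ) (𝓝[>] 0) (𝓝 0) :=
      ((continuous_const_mul 2).tendsto' 0 0 (mul_zero 2)).mono_left nhdsWithin_le_nhds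
    refine ((eventually_all.2 fun i => h2δ.eventually (eventually_le_nhds ?_)).and
      self_mem_nhdsWithin).exists
    exact abs_pos.2 (sub_ne_zero.2 (ha i))
  -- `f` ramps linearly from `0` at `a - δ` to `1` at `a + δ`
  set f : ℝ → ℝ := fun x => max 0 (min 1 ((x - a) / (2 * δ) + 1 / 2))
  have hf : ∀ x, δ < |x - a| → f x = if a < x then 1 else 0 := by
    intro x hx
    rcases lt_abs.1 hx with hx | hx
    · have : 1 ≤ (x - a) / (2 * δ) + 1 / 2 := by
        have : 1 / 2 ≤ (x - a) / (2 * δ) := by rw [le_div_iff₀ (by positivity)]; linarith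
        linarith
      simp only [f, min_eq_left this, max_eq_right zero_le_one, if_pos (by linarith : a < x)]
    · have : (x - a) / (2 * δ) + 1 / 2 ≤ 0 := by
        have : (x - a) / (2 * δ) ≤ -(1 / 2) := by rw [div_le_iff₀ (by positivity)]; linarith
        linarith
      simp only [f, min_eq_right (this.trans zero_le_one), max_eq_left this,
        if_neg (by linarith : ¬a < x)]
  refine ⟨f, by fun_prop, specProjAbove_eq_cfc hA₀ fun i => hf _ ?_, ?_⟩
  · linarith [hgap i]
  · filter_upwards [eventually_forall_lt_abs_eigenvalues_sub hA hA₀ hlim hδ hgap] with k hk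
    exact specProjAbove_eq_cfc (hA k) fun i => hf _ (hk i)

theorem eventually_card_eigenvalues_gt_eq {a : ℝ}
    (h : Tendsto (fun k => specProjAbove (hA k) a) atTop (𝓝 (specProjAbove hA₀ a))) :
    ∀ᶠ k in atTop, #{i | a < (hA k).eigenvalues i} = #{i | a < hA₀.eigenvalues i} := by
  have htr := ((Complex.continuous_re.comp continuous_id.matrix_trace).tendsto _).comp h
  simp only [Function.comp_def, id, trace_specProjAbove, Complex.natCast_re] at htr
  have hcard := Nat.isClosedEmbedding_coe_real.tendsto_nhds_iff.2 htr
  rw [nhds_discrete] at hcard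
  exact tendsto_pure.1 hcard

end Perturbation

theorem stmt_19_general {d : ℕ} (ρ : ℕ → Matrix (Fin d) (Fin d) ℂ) (ρ₀ : Matrix (Fin d) (Fin d) ℂ)
    (hρ : ∀ k, (ρ k).PosSemidef ∧ (ρ k).trace = 1)
    (hρ₀ : ρ₀.PosSemidef)
    (m : ℕ) (P : Matrix (Fin d) (Fin d) ℂ)
    (hP : IsTopSpectralProj hρ₀.isHermitian m P)
    (hlim : Tendsto (fun k => traceNorm (ρ k - ρ₀)) atTop (𝓝 0))
    (Q : ℕ → Matrix (Fin d) (Fin d) ℂ)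
    (hQ : ∀ k, IsTopSpectralProj (hρ k).1.isHermitian m (Q k)) :
    Tendsto (fun k => traceNorm (Q k * ρ k - P * ρ₀)) atTop (𝓝 0) := by
  obtain ⟨a, ha, hcard, rfl⟩ := hP
  have hH (k : ℕ) : (ρ k).IsHermitian := (hρ k).1.isHermitian
  have hρlim := tendsto_of_tendsto_traceNorm_sub hlim
  obtain ⟨f, hf, hP_cfc, hev⟩ :=
    exists_eventually_specProjAbove_eq_cfc hH hρ₀.isHermitian hρlim ha
  have hproj : Tendsto (fun k => specProjAbove (hH k) a) atTop
      (𝓝 (specProjAbove hρ₀.isHermitian a)) :=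
    hP_cfc ▸ (Matrix.tendsto_cfc hf hH hρ₀.isHermitian hρlim).congr' (hev.mono fun _ hk => hk.symm)
  have hQ_eq : ∀ᶠ k in atTop, Q k = specProjAbove (hH k) a := by
    filter_upwards [eventually_card_eigenvalues_gt_eq hH hρ₀.isHermitian hproj] with k hk
    obtain ⟨b, -, hb, hQk⟩ := hQ k
    exact hQk.trans (specProjAbove_eq_of_card_eq _ (hb.trans (hk.trans hcard).symm))
  have hdiff : Tendsto (fun k => specProjAbove (hH k) a * ρ k -
      specProjAbove hρ₀.isHermitian a * ρ₀) atTop (𝓝 0) := by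
    simpa using (hproj.mul hρlim).sub_const (specProjAbove hρ₀.isHermitian a * ρ₀)
  refine (tendsto_traceNorm_of_tendsto_zero hdiff).congr' ?_
  filter_upwards [hQ_eq] with k hk
  rw [hk]

/-- If `ρ₀` has a spectral gap at level `m` (so its spectral projector `P` onto the `m` largest
eigenvalues is well defined) and `ρₖ → ρ₀` in trace norm, then the truncations
`P_m^{ρₖ} ρₖ` converge to `P ρ₀` in trace norm. -/
theorem stmt_19 {d : ℕ} (ρ : ℕ → Matrix (Fin d) (Fin d) ℂ) (ρ₀ : Matrix (Fin d) (Fin d) ℂ)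
    (hρ : ∀ k, (ρ k).PosSemidef ∧ (ρ k).trace = 1)
    (hρ₀ : ρ₀.PosSemidef) (htr₀ : ρ₀.trace = 1)
    (m : ℕ) (P : Matrix (Fin d) (Fin d) ℂ)
    (hP : IsTopSpectralProj hρ₀.isHermitian m P)
    (hlim : Tendsto (fun k => traceNorm (ρ k - ρ₀)) atTop (𝓝 0))
    (Q : ℕ → Matrix (Fin d) (Fin d) ℂ)
    (hQ : ∀ k, IsTopSpectralProj (hρ k).1.isHermitian m (Q k)) :
    Tendsto (fun k => traceNorm (Q k * ρ k - P * ρ₀)) atTop (𝓝 0) :=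
  stmt_19_general ρ ρ₀ hρ hρ₀ m P hP hlim Q hQ
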